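/- Let f : ℝ² → ℝ be a non-degenerate weighted homogeneous polynomial of type (d; w₁, w₂) with w₁ ≥ w₂, and suppose that in every neighborhood of the origin there exists a point (a₁, a₂) with a₂ ≠ 0 and ∂f/∂x₁(a₁, a₂) = 0. Then the Łojasiewicz exponent of f equals L(f) = d/w₂ − 1. -/

import Mathlib

/-!
Along the weighted scaling `t ⋆ x = (t ^ w₁ x₁, t ^ w₂ x₂)` weighted homogeneity gives
`∂ᵢf(t ⋆ x) = t ^ (d - wᵢ) ∂ᵢf(x)`. Every `x ≠ 0` near the origin is `ρ(x) ⋆ u` with `u` on the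
compact weighted sphere `ρ = 1`, where `‖∇f‖` has a positive minimum by non-degeneracy; since
`ρ(x) ≤ 1` and `w₂` is the smallest weight this yields `‖∇f(x)‖ ≳ ρ(x) ^ (d - w₂)`, while
`‖x‖ ≲ ρ(x) ^ w₂`, so the Łojasiewicz inequality holds with every exponent `≥ d / w₂ - 1`.
Conversely, along the curve `t ⋆ a` through a point `a` with `a₂ ≠ 0` and `∂₁f(a) = 0` only
`∂₂f` survives: `‖∇f(t ⋆ a)‖ ∼ t ^ (d - w₂)` while `‖t ⋆ a‖ ≥ |a₂| t ^ w₂`, which rules out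
every smaller exponent.
-/

open MvPolynomial

/-- Euclidean norm of the gradient of a polynomial `f` at `x`. -/
noncomputable def gradNorm {n : ℕ} (f : MvPolynomial (Fin n) ℝ) (x : Fin n → ℝ) : ℝ :=
  Real.sqrt (∑ i, (eval x (pderiv i f)) ^ 2)

/-- Euclidean norm on `Fin n → ℝ`. -/
noncomputable def eNorm {n : ℕ} (x : Fin n → ℝ) : ℝ :=
  Real.sqrt (∑ i, (x i) ^ 2)

/-- `f` is weighted homogeneous of type `(d; w)`: every monomial `x^α` appearing in `f`
satisfies `∑ i, α i * w i = d`. -/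
def IsWeightedHomog {n : ℕ} (f : MvPolynomial (Fin n) ℝ) (w : Fin n → ℕ) (d : ℕ) : Prop :=
  ∀ α ∈ f.support, ∑ i, α i * w i = d

/-- `f` is non-degenerate (isolated singularity at the origin): in some neighborhood of `0`
the gradient of `f` vanishes only at the origin. -/
def Nondeg {n : ℕ} (f : MvPolynomial (Fin n) ℝ) : Prop :=
  ∃ U ∈ nhds (0 : Fin n → ℝ), ∀ x ∈ U, (∀ i, eval x (pderiv i f) = 0) → x = 0

/-- The Łojasiewicz inequality `‖∇f(x)‖ ≥ C ‖x‖^lam` holds near `0` for some `C > 0`. -/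
def LojIneq {n : ℕ} (f : MvPolynomial (Fin n) ℝ) (lam : ℝ) : Prop :=
  ∃ C > (0 : ℝ), ∃ U ∈ nhds (0 : Fin n → ℝ), ∀ x ∈ U, C * eNorm x ^ lam ≤ gradNorm f x

/-- The Łojasiewicz exponent of `f`: the infimum of all `lam > 0` for which the
Łojasiewicz inequality holds near the origin. -/
noncomputable def lojExp {n : ℕ} (f : MvPolynomial (Fin n) ℝ) : ℝ :=
  sInf {lam : ℝ | 0 < lam ∧ LojIneq f lam}

/-- The weighted "radius" `ρ(x) = (∑ i |x i| ^ (2 / w i)) ^ (1/2)`. -/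
noncomputable def rho {n : ℕ} (w : Fin n → ℕ) (x : Fin n → ℝ) : ℝ :=
  Real.sqrt (∑ i, |x i| ^ ((2 : ℝ) / (w i : ℝ)))

/-- The weighted norm of the gradient:
`‖grad_w f(x)‖_w = (∑ i ρ(x)^(2 wᵢ) |∂f/∂xᵢ(x)|²)^(1/2)`. -/
noncomputable def wGradNorm {n : ℕ} (w : Fin n → ℕ) (f : MvPolynomial (Fin n) ℝ)
    (x : Fin n → ℝ) : ℝ :=
  Real.sqrt (∑ i, rho w x ^ (2 * w i) * (eval x (pderiv i f)) ^ 2)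

open Filter Topology

def weightedScale {σ : Type*} (w : σ → ℕ) (t : ℝ) (x : σ → ℝ) : σ → ℝ :=
  fun i => t ^ w i * x i

section WeightedScale

variable {σ : Type*} (w : σ → ℕ)

theorem eval_weightedScale_monomial (t : ℝ) (x : σ → ℝ) (α : σ →₀ ℕ) (c : ℝ) :
    eval (weightedScale w t x) (monomial α c) = t ^ Finsupp.weight w α * eval x (monomial α c) := by
  simp only [eval_monomial, weightedScale, mul_pow, ← pow_mul', Finsupp.weight_apply, smul_eq_mul,
    Finsupp.prod, Finsupp.sum, Finset.prod_mul_distrib, Finset.prod_pow_eq_pow_sum]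
  ring

theorem MvPolynomial.IsWeightedHomogeneous.eval_weightedScale {g : MvPolynomial σ ℝ} {m : ℤ}
    (hg : g.IsWeightedHomogeneous (fun i => (w i : ℤ)) m) (t : ℝ) (x : σ → ℝ) :
    eval (weightedScale w t x) g = t ^ m * eval x g := by
  conv_lhs => rw [g.as_sum]
  conv_rhs => rw [g.as_sum]
  simp only [map_sum, Finset.mul_sum, eval_weightedScale_monomial]
  refine Finset.sum_congr rfl fun α hα => ?_
  rw [← hg (mem_support_iff.mp hα), ← zpow_natCast]
  congr 2
  simp [Finsupp.weight_apply, Finsupp.sum]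

theorem weightedScale_inv_cancel {t : ℝ} (ht : t ≠ 0) (x : σ → ℝ) :
    weightedScale w t (weightedScale w t⁻¹ x) = x := by
  funext i
  simp [weightedScale, inv_pow, mul_inv_cancel_left₀ (pow_ne_zero _ ht)]

theorem weightedScale_eq_zero_iff {t : ℝ} (ht : t ≠ 0) {x : σ → ℝ} :
    weightedScale w t x = 0 ↔ x = 0 := by
  simp [weightedScale, funext_iff, ht]

theorem tendsto_weightedScale_nhds_zero [Finite σ] {w : σ → ℕ} (hw : ∀ i, 0 < w i) (x : σ → ℝ) :
    Tendsto (fun t => weightedScale w t x) (𝓝 0) (𝓝 0) := by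
  have hcont : Continuous fun t => weightedScale w t x := by
    unfold weightedScale; fun_prop
  exact hcont.tendsto' 0 0 (funext fun i => by simp [weightedScale, (hw i).ne'])

end WeightedScale

namespace IsWeightedHomog

variable {n : ℕ} {f : MvPolynomial (Fin n) ℝ} {w : Fin n → ℕ} {d : ℕ}

theorem isWeightedHomogeneous (hf : IsWeightedHomog f w d) :
    f.IsWeightedHomogeneous (fun i => (w i : ℤ)) d := by
  intro α hα
  rw [Finsupp.weight_eq_sum, ← hf α (mem_support_iff.mpr hα)]
  push_cast
  simp [mul_comm]

theorem isWeightedHomogeneous_pderiv (hf : IsWeightedHomog f w d) (i : Fin n) :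
    (pderiv i f).IsWeightedHomogeneous (fun i => (w i : ℤ)) ((d : ℤ) - w i) :=
  hf.isWeightedHomogeneous.pderiv (sub_add_cancel _ _)

theorem eval_pderiv_weightedScale (hf : IsWeightedHomog f w d) (i : Fin n) (t : ℝ)
    (x : Fin n → ℝ) :
    eval (weightedScale w t x) (pderiv i f) = t ^ ((d : ℝ) - w i) * eval x (pderiv i f) := by
  rw [(hf.isWeightedHomogeneous_pderiv i).eval_weightedScale, ← Real.rpow_intCast]
  push_cast
  rfl

theorem le_of_pderiv_ne_zero (hf : IsWeightedHomog f w d) {i : Fin n} (hi : pderiv i f ≠ 0) :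
    w i ≤ d := by
  obtain ⟨β, hβ⟩ := ne_zero_iff.mp hi
  have hweight := hf.isWeightedHomogeneous_pderiv i hβ
  have : (0 : ℤ) ≤ Finsupp.weight (fun i => (w i : ℤ)) β := by
    rw [Finsupp.weight_eq_sum]; positivity
  omega

end IsWeightedHomog

theorem Nondeg.eq_zero_of_eval_pderiv_eq_zero {n : ℕ} {f : MvPolynomial (Fin n) ℝ} (hnd : Nondeg f)
    {w : Fin n → ℕ} {d : ℕ} (hf : IsWeightedHomog f w d) (hw : ∀ i, 0 < w i) {x : Fin n → ℝ}
    (hx : ∀ i, eval x (pderiv i f) = 0) : x = 0 := by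
  obtain ⟨U, hU, hU0⟩ := hnd
  have hmem : ∀ᶠ t in 𝓝[>] 0, weightedScale w t x ∈ U :=
    ((tendsto_weightedScale_nhds_zero hw x).mono_left nhdsWithin_le_nhds).eventually_mem hU
  obtain ⟨t, htU, ht⟩ := (hmem.and self_mem_nhdsWithin).exists
  refine (weightedScale_eq_zero_iff w (ne_of_gt ht)).mp (hU0 _ htU fun i => ?_)
  rw [hf.eval_pderiv_weightedScale i t, hx i, mul_zero]

section EuclideanNorm

variable {n : ℕ}

theorem eNorm_nonneg (x : Fin n → ℝ) : 0 ≤ eNorm x :=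
  Real.sqrt_nonneg _

theorem eNorm_eq_zero_iff {x : Fin n → ℝ} : eNorm x = 0 ↔ x = 0 := by
  rw [eNorm, Real.sqrt_eq_zero (Finset.sum_nonneg fun i _ => sq_nonneg (x i)),
    Finset.sum_eq_zero_iff_of_nonneg fun i _ => sq_nonneg (x i)]
  simp [funext_iff]

theorem continuous_eNorm : Continuous (eNorm : (Fin n → ℝ) → ℝ) := by
  unfold eNorm; fun_prop

theorem abs_le_eNorm (x : Fin n → ℝ) (i : Fin n) : |x i| ≤ eNorm x := by
  rw [← Real.sqrt_sq_eq_abs]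
  exact Real.sqrt_le_sqrt
    (Finset.single_le_sum (fun j _ => sq_nonneg (x j)) (Finset.mem_univ i))

theorem eNorm_le_of_abs_le {x y : Fin n → ℝ} (h : ∀ i, |x i| ≤ |y i|) : eNorm x ≤ eNorm y :=
  Real.sqrt_le_sqrt (Finset.sum_le_sum fun i _ => sq_le_sq.mpr (h i))

theorem eNorm_const_mul {c : ℝ} (hc : 0 ≤ c) (x : Fin n → ℝ) :
    eNorm (fun i => c * x i) = c * eNorm x := by
  simp only [eNorm, mul_pow, ← Finset.mul_sum]
  rw [Real.sqrt_mul (sq_nonneg c), Real.sqrt_sq hc]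

theorem eNorm_le_sqrt_card_mul {x : Fin n → ℝ} {s : ℝ} (hs : 0 ≤ s) (h : ∀ i, |x i| ≤ s) :
    eNorm x ≤ √n * s := by
  calc eNorm x ≤ eNorm fun _ => s := eNorm_le_of_abs_le fun i => (h i).trans (le_abs_self s)
    _ = √n * s := by simp [eNorm, Real.sqrt_mul (Nat.cast_nonneg n), Real.sqrt_sq hs]

theorem eNorm_eq_abs_of_forall_ne {x : Fin n → ℝ} {j : Fin n} (h : ∀ i ≠ j, x i = 0) :
    eNorm x = |x j| := by
  rw [eNorm, Finset.sum_eq_single j (fun i _ hi => by rw [h i hi, sq, zero_mul]) (by simp),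
    Real.sqrt_sq_eq_abs]

end EuclideanNorm

theorem gradNorm_eq_eNorm {n : ℕ} (f : MvPolynomial (Fin n) ℝ) (x : Fin n → ℝ) :
    gradNorm f x = eNorm fun i => eval x (pderiv i f) :=
  rfl

section WeightedRadius

variable {n : ℕ} {w : Fin n → ℕ}

theorem rho_nonneg (w : Fin n → ℕ) (x : Fin n → ℝ) : 0 ≤ rho w x :=
  Real.sqrt_nonneg _

theorem continuous_rho (hw : ∀ i, 0 < w i) : Continuous (rho w) := by
  unfold rho
  have := fun i => Real.continuous_rpow_const (q := 2 / (w i : ℝ)) (by positivity [hw i])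
  fun_prop

theorem rho_zero (hw : ∀ i, 0 < w i) : rho w 0 = 0 := by
  simp [rho, Real.zero_rpow, (hw _).ne']

theorem rho_weightedScale (hw : ∀ i, 0 < w i) {t : ℝ} (ht : 0 ≤ t) (x : Fin n → ℝ) :
    rho w (weightedScale w t x) = t * rho w x := by
  have hterm : ∀ i, |t ^ w i * x i| ^ ((2 : ℝ) / w i) = t ^ 2 * |x i| ^ ((2 : ℝ) / w i) := by
    intro i
    rw [abs_mul, abs_pow, abs_of_nonneg ht, Real.mul_rpow (by positivity) (abs_nonneg _),
      ← Real.rpow_natCast, ← Real.rpow_mul ht, mul_div_cancel₀ _ (by positivity [hw i])]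
    norm_cast
  simp only [rho, weightedScale, hterm, ← Finset.mul_sum]
  rw [Real.sqrt_mul (sq_nonneg t), Real.sqrt_sq ht]

theorem abs_le_rho_pow (hw : ∀ i, 0 < w i) (x : Fin n → ℝ) (i : Fin n) :
    |x i| ≤ rho w x ^ w i := by
  have hwi : (0 : ℝ) < w i := by exact_mod_cast hw i
  rw [← Real.rpow_le_rpow_iff (abs_nonneg _) (by positivity [rho_nonneg w x])
    (by positivity : (0 : ℝ) < 2 / w i)]
  calc |x i| ^ ((2 : ℝ) / w i) ≤ ∑ j, |x j| ^ ((2 : ℝ) / w j) :=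
        Finset.single_le_sum (f := fun j => |x j| ^ ((2 : ℝ) / w j)) (fun j _ => by positivity)
          (Finset.mem_univ i)
    _ = (rho w x ^ w i) ^ ((2 : ℝ) / w i) := by
        rw [← Real.rpow_natCast, ← Real.rpow_mul (rho_nonneg w x), mul_div_cancel₀ _ hwi.ne',
          Real.rpow_two, rho, Real.sq_sqrt (by positivity)]

theorem rho_pos (hw : ∀ i, 0 < w i) {x : Fin n → ℝ} (hx : x ≠ 0) : 0 < rho w x := by
  refine (rho_nonneg w x).lt_of_ne fun h => hx (funext fun i => ?_)
  simpa [← h, zero_pow (hw i).ne'] using abs_le_rho_pow hw x i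

theorem isCompact_rho_eq_one (hw : ∀ i, 0 < w i) : IsCompact {x : Fin n → ℝ | rho w x = 1} := by
  refine (isCompact_closedBall 0 1).of_isClosed_subset
    (isClosed_eq (continuous_rho hw) continuous_const) fun x hx => ?_
  rw [mem_closedBall_zero_iff, pi_norm_le_iff_of_nonneg zero_le_one]
  intro i
  simpa [hx.out] using abs_le_rho_pow hw x i

end WeightedRadius

section UpperBound

variable {n : ℕ} {f : MvPolynomial (Fin n) ℝ} {w : Fin n → ℕ} {d : ℕ}

theorem continuous_gradNorm (f : MvPolynomial (Fin n) ℝ) : Continuous (gradNorm f) :=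
  continuous_eNorm.comp (continuous_pi fun i => (pderiv i f).continuous_eval)

theorem exists_pos_le_gradNorm_of_rho_eq_one (hf : IsWeightedHomog f w d) (hnd : Nondeg f)
    (hw : ∀ i, 0 < w i) : ∃ m > 0, ∀ u, rho w u = 1 → m ≤ gradNorm f u := by
  refine (isCompact_rho_eq_one hw).exists_forall_le' (continuous_gradNorm f).continuousOn
    fun u hu => (eNorm_nonneg _).lt_of_ne' fun h => ?_
  rw [← gradNorm_eq_eNorm, gradNorm_eq_eNorm, eNorm_eq_zero_iff] at h
  have hu0 := hnd.eq_zero_of_eval_pderiv_eq_zero hf hw (congrFun h)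
  simp [hu0, rho_zero hw] at hu

theorem rpow_mul_gradNorm_le_gradNorm_weightedScale (hf : IsWeightedHomog f w d) {w₀ : ℕ}
    (hw : ∀ i, w₀ ≤ w i) {t : ℝ} (ht₀ : 0 < t) (ht₁ : t ≤ 1) (x : Fin n → ℝ) :
    t ^ ((d : ℝ) - w₀) * gradNorm f x ≤ gradNorm f (weightedScale w t x) := by
  rw [gradNorm_eq_eNorm, gradNorm_eq_eNorm, ← eNorm_const_mul (Real.rpow_nonneg ht₀.le _)]
  refine eNorm_le_of_abs_le fun i => ?_
  rw [hf.eval_pderiv_weightedScale, abs_mul, abs_mul, abs_of_pos (Real.rpow_pos_of_pos ht₀ _),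
    abs_of_pos (Real.rpow_pos_of_pos ht₀ _)]
  gcongr ?_ * _
  exact Real.rpow_le_rpow_of_exponent_ge ht₀ ht₁ (by gcongr; exact hw i)

theorem exists_pos_mul_rho_rpow_le_gradNorm (hf : IsWeightedHomog f w d) (hnd : Nondeg f)
    {w₀ : ℕ} (hw₀ : 0 < w₀) (hw : ∀ i, w₀ ≤ w i) :
    ∃ m > 0, ∀ x, x ≠ 0 → rho w x ≤ 1 → m * rho w x ^ ((d : ℝ) - w₀) ≤ gradNorm f x := by
  have hwpos : ∀ i, 0 < w i := fun i => hw₀.trans_le (hw i)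
  obtain ⟨m, hm, hmin⟩ := exists_pos_le_gradNorm_of_rho_eq_one hf hnd hwpos
  refine ⟨m, hm, fun x hx hρ => ?_⟩
  set t := rho w x
  have ht : 0 < t := rho_pos hwpos hx
  have hu : rho w (weightedScale w t⁻¹ x) = 1 := by
    rw [rho_weightedScale hwpos (inv_nonneg.2 ht.le), inv_mul_cancel₀ ht.ne']
  calc m * t ^ ((d : ℝ) - w₀) ≤ t ^ ((d : ℝ) - w₀) * gradNorm f (weightedScale w t⁻¹ x) := by
        rw [mul_comm]; gcongr; exact hmin _ hu
    _ ≤ gradNorm f (weightedScale w t (weightedScale w t⁻¹ x)) :=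
        rpow_mul_gradNorm_le_gradNorm_weightedScale hf hw ht hρ _
    _ = gradNorm f x := by rw [weightedScale_inv_cancel w ht.ne']

theorem lojIneq_of_div_sub_one_le [NeZero n] (hf : IsWeightedHomog f w d) (hnd : Nondeg f)
    {w₀ : ℕ} (hw₀ : 0 < w₀) (hw : ∀ i, w₀ ≤ w i) (hd : w₀ ≤ d) {lam : ℝ} (hlam : 0 < lam)
    (he : (d : ℝ) / w₀ - 1 ≤ lam) : LojIneq f lam := by
  have hwpos : ∀ i, 0 < w i := fun i => hw₀.trans_le (hw i)
  obtain ⟨m, hm, hgrad⟩ := exists_pos_mul_rho_rpow_le_gradNorm hf hnd hw₀ hw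
  set e : ℝ := (d : ℝ) / w₀ - 1
  have hw₀R : (0 : ℝ) < w₀ := by exact_mod_cast hw₀
  have he₀ : 0 ≤ e := by
    rw [sub_nonneg, one_le_div hw₀R]; exact_mod_cast hd
  have hwe : (w₀ : ℝ) * e = d - w₀ := by
    simp only [e]; field_simp
  have hU : {x | rho w x < 1} ∩ {x | eNorm x < 1} ∈ 𝓝 (0 : Fin n → ℝ) :=
    inter_mem ((continuous_rho hwpos).continuousAt.preimage_mem_nhds
        (Iio_mem_nhds (by rw [rho_zero hwpos]; exact one_pos)))
      (continuous_eNorm.continuousAt.preimage_mem_nhds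
        (Iio_mem_nhds (by rw [eNorm_eq_zero_iff.2 rfl]; exact one_pos)))
  have hn : 0 < √(n : ℝ) ^ e := Real.rpow_pos_of_pos (Real.sqrt_pos.2 (mod_cast NeZero.pos n)) e
  refine ⟨m / √n ^ e, div_pos hm hn, _, hU, fun x ⟨hρ, hE⟩ => ?_⟩
  rcases eq_or_ne x 0 with rfl | hx
  · rw [eNorm_eq_zero_iff.2 rfl, Real.zero_rpow hlam.ne', mul_zero]
    exact eNorm_nonneg _
  have hnorm : eNorm x ≤ √n * rho w x ^ w₀ :=
    eNorm_le_sqrt_card_mul (by positivity [rho_nonneg w x]) fun i =>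
      (abs_le_rho_pow hwpos x i).trans (pow_le_pow_of_le_one (rho_nonneg w x) hρ.out.le (hw i))
  have hpos : 0 < eNorm x := (eNorm_nonneg x).lt_of_ne' (eNorm_eq_zero_iff.not.2 hx)
  calc m / √n ^ e * eNorm x ^ lam ≤ m / √n ^ e * eNorm x ^ e := by
        gcongr _ * ?_
        exact Real.rpow_le_rpow_of_exponent_ge hpos hE.out.le he
    _ ≤ m / √n ^ e * (√n * rho w x ^ w₀) ^ e := by gcongr
    _ = m * rho w x ^ ((d : ℝ) - w₀) := by
        rw [Real.mul_rpow (by positivity) (by positivity [rho_nonneg w x]), ← Real.rpow_natCast,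
          ← Real.rpow_mul (rho_nonneg w x), hwe]
        field_simp [hn.ne']
    _ ≤ gradNorm f x := hgrad x hx hρ.out.le

end UpperBound

theorem le_of_eventually_mul_rpow_le {C G α β : ℝ} (hC : 0 < C)
    (h : ∀ᶠ t in 𝓝[>] 0, C * t ^ α ≤ G * t ^ β) : β ≤ α := by
  by_contra! hαβ
  have hγ : 0 < β - α := sub_pos.2 hαβ
  have hlim : Tendsto (fun t : ℝ => G * t ^ (β - α)) (𝓝[>] 0) (𝓝 0) := by
    have := (Real.continuousAt_rpow_const 0 (β - α) (Or.inr hγ.le)).tendsto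
    simpa [Real.zero_rpow hγ.ne'] using (this.mono_left nhdsWithin_le_nhds).const_mul G
  have hle : ∀ᶠ t in 𝓝[>] 0, C ≤ G * t ^ (β - α) := by
    filter_upwards [h, self_mem_nhdsWithin] with t ht ht₀
    rwa [Real.rpow_sub ht₀, ← mul_div_assoc, le_div_iff₀ (Real.rpow_pos_of_pos ht₀ _)]
  exact hC.not_ge (ge_of_tendsto hlim hle)

theorem LojIneq.div_sub_one_le {n : ℕ} {f : MvPolynomial (Fin n) ℝ} {lam : ℝ} (hL : LojIneq f lam)
    (hlam : 0 ≤ lam) {w : Fin n → ℕ} {d : ℕ} (hf : IsWeightedHomog f w d) (hw : ∀ i, 0 < w i)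
    {a : Fin n → ℝ} {j : Fin n} (haj : a j ≠ 0) (ha : ∀ i ≠ j, eval a (pderiv i f) = 0) :
    (d : ℝ) / w j - 1 ≤ lam := by
  obtain ⟨C, hC, U, hU, hineq⟩ := hL
  have hmem : ∀ᶠ t in 𝓝[>] 0, weightedScale w t a ∈ U :=
    ((tendsto_weightedScale_nhds_zero hw a).mono_left nhdsWithin_le_nhds).eventually_mem hU
  have hcurve : ∀ᶠ t in 𝓝[>] 0, C * |a j| ^ lam * t ^ (w j * lam)
      ≤ |eval a (pderiv j f)| * t ^ ((d : ℝ) - w j) := by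
    filter_upwards [hmem, self_mem_nhdsWithin] with t htU (ht : 0 < t)
    have hgrad : gradNorm f (weightedScale w t a) = t ^ ((d : ℝ) - w j) * |eval a (pderiv j f)| := by
      rw [gradNorm_eq_eNorm, eNorm_eq_abs_of_forall_ne (j := j) fun i hi => by
          rw [hf.eval_pderiv_weightedScale, ha i hi, mul_zero],
        hf.eval_pderiv_weightedScale, abs_mul, abs_of_pos (Real.rpow_pos_of_pos ht _)]
    calc C * |a j| ^ lam * t ^ (w j * lam) = C * (t ^ w j * |a j|) ^ lam := by
          rw [Real.mul_rpow (by positivity) (abs_nonneg _), ← Real.rpow_natCast,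
            ← Real.rpow_mul ht.le]
          ring
      _ ≤ C * eNorm (weightedScale w t a) ^ lam := by
          gcongr
          simpa [weightedScale, abs_mul, abs_of_pos ht] using abs_le_eNorm (weightedScale w t a) j
      _ ≤ gradNorm f (weightedScale w t a) := hineq _ htU
      _ = |eval a (pderiv j f)| * t ^ ((d : ℝ) - w j) := by rw [hgrad, mul_comm]
  have hwj : (0 : ℝ) < w j := by exact_mod_cast hw j
  have := le_of_eventually_mul_rpow_le (mul_pos hC (Real.rpow_pos_of_pos (abs_pos.2 haj) _)) hcurve
  rw [div_sub_one hwj.ne', div_le_iff₀ hwj]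
  linarith

theorem lojExp_eq_of_lojIneq_iff {n : ℕ} {f : MvPolynomial (Fin n) ℝ} {e : ℝ} (he : 0 ≤ e)
    (h : ∀ lam, 0 < lam → (LojIneq f lam ↔ e ≤ lam)) : lojExp f = e := by
  have hset : {lam | 0 < lam ∧ LojIneq f lam} = Set.Ioi 0 ∩ Set.Ici e :=
    Set.ext fun lam => and_congr_right (h lam)
  rw [lojExp, hset]
  rcases he.eq_or_lt with rfl | he
  · rw [Set.inter_eq_left.2 Set.Ioi_subset_Ici_self, csInf_Ioi]
  · rw [Set.inter_eq_right.2 (Set.Ici_subset_Ioi.2 he), csInf_Ici]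

theorem stmt2_general (d w₁ w₂ : ℕ) (hw₂ : 0 < w₂) (hw : w₂ ≤ w₁)
    (f : MvPolynomial (Fin 2) ℝ)
    (hhom : IsWeightedHomog f ![w₁, w₂] d)
    (hnd : Nondeg f)
    (hcase : ∀ U ∈ nhds (0 : Fin 2 → ℝ), ∃ a ∈ U,
      a 1 ≠ 0 ∧ eval a (pderiv 0 f) = 0) :
    lojExp f = (d : ℝ) / w₂ - 1 := by
  have hw₂le : ∀ i, w₂ ≤ ![w₁, w₂] i := Fin.forall_fin_two.2 ⟨hw, le_rfl⟩
  have hwpos : ∀ i, 0 < ![w₁, w₂] i := fun i => hw₂.trans_le (hw₂le i)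
  obtain ⟨a, -, ha₁, ha₀⟩ := hcase Set.univ Filter.univ_mem
  have ha : ∀ i ≠ 1, eval a (pderiv i f) = 0 := Fin.forall_fin_two.2 ⟨fun _ => ha₀, by simp⟩
  have hpd : pderiv 1 f ≠ 0 := fun h => ha₁ <| congrFun
    (hnd.eq_zero_of_eval_pderiv_eq_zero hhom hwpos (Fin.forall_fin_two.2 ⟨ha₀, by simp [h]⟩)) 1
  have hd : w₂ ≤ d := hhom.le_of_pderiv_ne_zero hpd
  refine lojExp_eq_of_lojIneq_iff ?_ fun lam hlam =>
    ⟨fun hL => hL.div_sub_one_le hlam.le hhom hwpos ha₁ ha,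
      lojIneq_of_div_sub_one_le hhom hnd hw₂ hw₂le hd hlam⟩
  have hw₂R : (0 : ℝ) < w₂ := by exact_mod_cast hw₂
  rw [sub_nonneg, one_le_div hw₂R]
  exact_mod_cast hd

theorem stmt2 (d w₁ w₂ : ℕ) (hd : 0 < d) (hw₂ : 0 < w₂) (hw : w₂ ≤ w₁)
    (f : MvPolynomial (Fin 2) ℝ)
    (hhom : IsWeightedHomog f ![w₁, w₂] d)
    (hnd : Nondeg f)
    (hcase : ∀ U ∈ nhds (0 : Fin 2 → ℝ), ∃ a ∈ U,
      a 1 ≠ 0 ∧ eval a (pderiv 0 f) = 0) :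
    lojExp f = (d : ℝ) / w₂ - 1 :=
  stmt2_general d w₁ w₂ hw₂ hw f hhom hnd hcase
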